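/- In the dual algebra C* of the matroid-minor coalgebra, the product of two matroids M and N on disjoint ground sets is M · N = Σ_{M⊕N ≤ L ≤ M□N} L, the sum over all matroids L in the weak-order interval from M ⊕ N to M □ N. If the ground sets of M and N are not disjoint, then M · N = 0. -/

import Mathlib

attribute [local instance] Classical.propDecidable
set_option maxSynthPendingDepth 3

open Matroid

variable {α : Type*}

/-! ### Basic matroid operations -/

/-- The contraction `M / C` of a matroid by a set, defined as the dual of the
deletion (restriction to the complement) of the dual. Its ground set is `M.E \ C`. -/
def Matroid.con (M : Matroid α) (C : Set α) : Matroid α := (M✶ ↾ (M.E \ C))✶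

/-- The rank `ρ(M)` of a matroid: the common cardinality of its bases. -/
noncomputable def Matroid.erank (M : Matroid α) : ℕ∞ := ⨆ B ∈ {B | M.IsBase B}, B.encard

/-- `IsFreeProduct M N P` says that `P` is the free product `M □ N`: its ground set is
`M.E ∪ N.E`, and its bases are exactly the sets `B ⊆ M.E ∪ N.E` of cardinality
`ρ(M) + ρ(N)` such that `B ∩ M.E` is independent in `M` and `B ∩ N.E` spans `N`. -/
def IsFreeProduct (M N P : Matroid α) : Prop :=
  P.E = M.E ∪ N.E ∧ ∀ B : Set α,
    (P.IsBase B ↔ B ⊆ M.E ∪ N.E ∧ B.encard = M.erank + N.erank ∧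
      M.Indep (B ∩ M.E) ∧ N.Spanning (B ∩ N.E))

/-- A matroid is reducible if it is a free product of two nonempty matroids. -/
def Reducible (M : Matroid α) : Prop :=
  ∃ P Q : Matroid α, P.E.Nonempty ∧ Q.E.Nonempty ∧ IsFreeProduct P Q M

/-- A matroid is irreducible (with respect to free product) if it is nonempty and is
not a free product of two nonempty matroids. -/
def Irred (M : Matroid α) : Prop := M.E.Nonempty ∧ ¬ Reducible M

/-! ### The poset of matroids on finite subsets of `α`, under the weak order -/

/-- There are only finitely many matroids with a given finite ground set. -/
lemma matroidOn_finite (S : Set α) (hS : S.Finite) : {M : Matroid α | M.E = S}.Finite := by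
  have h2 : {T : Set (Set α) | T ⊆ {B | B ⊆ S}}.Finite := hS.finite_subsets.finite_subsets
  refine Set.Finite.of_finite_image (f := fun M => {B | M.IsBase B}) (h2.subset ?_) ?_
  · rintro T ⟨M, hM, rfl⟩
    exact fun B hB => hM ▸ hB.subset_ground
  · rintro M₁ hM₁ M₂ hM₂ hT
    exact Matroid.ext_isBase (hM₁.trans hM₂.symm)
      (fun B _ => Set.ext_iff.mp hT B)

/-- The set `W` of all matroids whose ground set is a finite subset of `α`. -/
def FinMatroid (α : Type*) := {M : Matroid α // M.E.Finite}

namespace FinMatroid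

instance : CoeTC (FinMatroid α) (Matroid α) := ⟨Subtype.val⟩

/-- Constructor for `FinMatroid`. -/
def mk (M : Matroid α) (h : M.E.Finite) : FinMatroid α := ⟨M, h⟩

/-- The rank-preserving weak order: `M ≤ N` iff `M` and `N` have the same ground set and
every base of `M` is a base of `N`. -/
instance : PartialOrder (FinMatroid α) where
  le M N := M.1.E = N.1.E ∧ ∀ B, M.1.IsBase B → N.1.IsBase B
  le_refl M := ⟨rfl, fun _ h => h⟩
  le_trans a b c h h' := ⟨h.1.trans h'.1, fun B hB => h'.2 B (h.2 B hB)⟩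
  le_antisymm a b h h' := Subtype.ext
    (Matroid.ext_isBase h.1 (fun B _ => ⟨h.2 B, h'.2 B⟩))

lemma upperSet_finite (M : FinMatroid α) : {N : FinMatroid α | M ≤ N}.Finite := by
  have hsub : {N : FinMatroid α | M ≤ N} ⊆
      Subtype.val ⁻¹' {L : Matroid α | L.E = M.1.E} := fun N hN => hN.1.symm
  exact (Set.Finite.preimage Subtype.val_injective.injOn
    (matroidOn_finite _ M.2)).subset hsub

noncomputable instance : LocallyFiniteOrder (FinMatroid α) :=
  LocallyFiniteOrder.ofFiniteIcc fun a b => (upperSet_finite a).subset fun _ hx => hx.1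

/-- Restriction, as an operation on matroids with finite ground set. For `A ⊆ M.E` this is
exactly `M|A`. -/
noncomputable def res (M : FinMatroid α) (A : Set α) : FinMatroid α :=
  ⟨M.1 ↾ (A ∩ M.1.E), by
    rw [Matroid.restrict_ground_eq]; exact M.2.subset Set.inter_subset_right⟩

/-- Contraction, as an operation on matroids with finite ground set: `M/A`. -/
noncomputable def con (M : FinMatroid α) (A : Set α) : FinMatroid α :=
  ⟨M.1.con A, by
    have : (M.1.con A).E = M.1.E \ A := by simp [Matroid.con]
    rw [this]; exact M.2.subset Set.diff_subset⟩

lemma matroidOnW_finite (S : Set α) (hS : S.Finite) :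
    {L : FinMatroid α | L.1.E = S}.Finite :=
  Set.Finite.preimage Subtype.val_injective.injOn (matroidOn_finite S hS)

end FinMatroid

/-! ### The matroid-minor coalgebra -/

/-- The underlying vector space of the matroid-minor coalgebra: the free `K`-vector space
with the set of matroids on finite subsets of `α` as basis. -/
abbrev MMC (α : Type*) (K : Type*) [Field K] : Type _ := FinMatroid α →₀ K

variable (K : Type*) [Field K]

/-- Coproduct on a basis matroid: `δ(M) = Σ_{A ⊆ E} (M|A) ⊗ (M/A)`. -/
noncomputable def deltaB (M : FinMatroid α) : TensorProduct K (MMC α K) (MMC α K) :=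
  ∑ A ∈ M.2.toFinset.powerset,
    Finsupp.single (M.res ↑A) 1 ⊗ₜ[K] Finsupp.single (M.con ↑A) 1

/-- The coproduct of the matroid-minor coalgebra. -/
noncomputable def delta : MMC α K →ₗ[K] TensorProduct K (MMC α K) (MMC α K) :=
  Finsupp.lsum K fun M => LinearMap.toSpanSingleton K _ (deltaB K M)

/-- The empty matroid. -/
def emptyW : FinMatroid α := ⟨Matroid.emptyOn α, by simp⟩

/-- The group-like element `1` of the matroid-minor coalgebra (the empty matroid). -/
noncomputable def oneC : MMC α K := Finsupp.single emptyW 1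

/-- The counit of the matroid-minor coalgebra. -/
noncomputable def counit : MMC α K →ₗ[K] K :=
  Finsupp.lsum K fun M => if M = emptyW then LinearMap.id else 0

/-- The linear map `x ↦ 1 ⊗ x + x ⊗ 1`. -/
noncomputable def groupLikeMap : MMC α K →ₗ[K] TensorProduct K (MMC α K) (MMC α K) :=
  TensorProduct.mk K (MMC α K) (MMC α K) (oneC K) +
    (TensorProduct.mk K (MMC α K) (MMC α K)).flip (oneC K)

/-- `x ↦ δ(x) - (1 ⊗ x + x ⊗ 1)`; its kernel is the space of primitive elements. -/
noncomputable def primMap : MMC α K →ₗ[K] TensorProduct K (MMC α K) (MMC α K) :=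
  delta K (α := α) - groupLikeMap (α := α) K

/-- The subspace of primitive elements of the matroid-minor coalgebra. -/
noncomputable def PrimC : Submodule K (MMC α K) := LinearMap.ker (primMap K)

/-! ### Möbius-inverted bases -/

/-- Möbius function of the weak order. -/
noncomputable def muW (M N : FinMatroid α) : ℤ := IncidenceAlgebra.mu ℤ M N

/-- The subposet `R_M = {M} ∪ {N > M : N reducible}` of the weak order. -/
def RMset (M : FinMatroid α) : Set (FinMatroid α) := {N | N = M ∨ (M < N ∧ Reducible N.1)}

lemma RMset_finite (M : FinMatroid α) : (RMset M).Finite :=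
  (FinMatroid.upperSet_finite M).subset (by rintro N (rfl | ⟨h, -⟩); exacts [le_refl N, h.le])

/-- The Möbius function `μ_R(M, N)` of the subposet `[M,N]_R = {M, N} ∪ ([M,N] ∩ R)`,
where `R` is the class of reducible matroids (the convention extending the Möbius function
of the subposet of reducible matroids to arbitrary intervals of the weak order). -/
noncomputable def muR (M N : FinMatroid α) : ℤ :=
  IncidenceAlgebra.mu ℤ
    (α := {L : FinMatroid α // L = M ∨ L = N ∨ (M ≤ L ∧ L ≤ N ∧ Reducible L.1)})
    ⟨M, Or.inl rfl⟩ ⟨N, Or.inr (Or.inl rfl)⟩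

/-- The basis element `w_M = Σ_{N ≥ M} μ_W(M,N) N`. -/
noncomputable def wElt (M : FinMatroid α) : MMC α K :=
  ∑ N ∈ (FinMatroid.upperSet_finite M).toFinset, (muW M N : K) • Finsupp.single N 1

/-- The basis element `r_M = Σ_{N ∈ R_M} μ_R(M,N) N`. -/
noncomputable def rElt (M : FinMatroid α) : MMC α K :=
  ∑ N ∈ (RMset_finite M).toFinset, (muR M N : K) • Finsupp.single N 1

/-! ### The dual algebra product -/

/-- The pairing coefficient `⟨δ(L), P ⊗ Q⟩`: the number of subsets `A ⊆ E(L)` with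
`L|A = P` and `L/A = Q`. -/
noncomputable def mulCoeff (P Q L : FinMatroid α) : K :=
  ((L.2.toFinset.powerset).filter (fun A => L.res ↑A = P ∧ L.con ↑A = Q)).card

/-- The product `P · Q` in the dual algebra `C*` of the matroid-minor coalgebra:
`P · Q = Σ_L ⟨δ(L), P ⊗ Q⟩ L` (the sum ranges over matroids on `E(P) ∪ E(Q)`,
which are the only ones with a nonzero coefficient). -/
noncomputable def mulB (P Q : FinMatroid α) : MMC α K :=
  ∑ L ∈ (FinMatroid.matroidOnW_finite (P.1.E ∪ Q.1.E) (P.2.union Q.2)).toFinset,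
    mulCoeff K P Q L • Finsupp.single L 1

/-- The subposet `I_M = {M} ∪ {N > M : N irreducible}` of the weak order. -/
def IMset (M : FinMatroid α) : Set (FinMatroid α) := {N | N = M ∨ (M < N ∧ Irred N.1)}

lemma IMset_finite (M : FinMatroid α) : (IMset M).Finite :=
  (FinMatroid.upperSet_finite M).subset (by rintro N (rfl | ⟨h, -⟩); exacts [le_refl N, h.le])

/-- `I_M \ {M}`, i.e. the set of irreducible matroids strictly above `M`. -/
def IMset' (M : FinMatroid α) : Set (FinMatroid α) := {N | M < N ∧ Irred N.1}

lemma IMset'_finite (M : FinMatroid α) : (IMset' M).Finite :=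
  (FinMatroid.upperSet_finite M).subset (fun _ h => h.1.le)

/-! The coefficient of `L` in `P · Q` counts the sets `A ⊆ E(L)` with `L|A = P` and `L/A = Q`.
The first condition forces `A = E(P)` and the second `E(Q) = E(L) \ E(P)`, so the product vanishes
unless `E(P)` and `E(Q)` are disjoint, and otherwise every coefficient is `0` or `1`.

For `L` on `E(P) ∪ E(Q)`, the conditions `L|E(P) = P` and `L/E(P) = Q` are equivalent to
`P ⊕ Q ≤ L ≤ P □ Q`. The key fact is that, for a basis `I` of `E(P)` in `L`, the bases of
`L/E(P)` are the sets `B` disjoint from `E(P)` with `B ∪ I` a base of `L`. Conversely, the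
independence condition defining `P □ Q` identifies `L|E(P)` with `P`; then every base of `Q` is a
base of `L/E(P)` since `P ⊕ Q ≤ L`, while the spanning condition makes every base of `L/E(P)` span
`Q`, and as bases form an antichain, `L/E(P) = Q`. -/

open Set

namespace Matroid

variable {M N P Q L F : Matroid α} {X I B BP BQ : Set α}

lemma con_eq_contract (M : Matroid α) (C : Set α) : M.con C = M ／ C := rfl

lemma erank_eq_eRank (M : Matroid α) : M.erank = M.eRank := by
  rw [erank, eRank, iSup_subtype']
  rfl

/-- `X \ I` consists of loops of `M ／ I`, so deleting it from `M ／ I` does not change bases. -/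
lemma IsBasis.contract_isBase_iff (hI : M.IsBasis I X) :
    (M ／ X).IsBase B ↔ M.IsBase (B ∪ I) ∧ Disjoint B X := by
  have hcoindep : (M ／ I).Coindep (X \ I) := by
    rw [coindep_def]
    exact (M ／ I)✶.coloops_indep.subset (dual_coloops ▸ hI.sdiff_subset_loops_contract)
  rw [hI.contract_eq_contract_delete, hcoindep.delete_isBase_iff, hI.indep.contract_isBase_iff,
    and_assoc, ← disjoint_union_right, union_sdiff_cancel hI.subset]

lemma eq_of_isBase_imp_of_isBase_spanning (hE : M.E = N.E)
    (hMN : ∀ B, M.IsBase B → N.IsBase B) (hNM : ∀ B, N.IsBase B → M.Spanning B) : M = N :=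
  ext_isBase hE fun B _ ↦ ⟨hMN B, fun hB ↦ by
    obtain ⟨B', hB', hB'B⟩ := (hNM B hB).exists_isBase_subset
    rwa [← (hMN B' hB').eq_of_subset_isBase hB hB'B]⟩

lemma IsBase.union_isBase_disjointSum (hd : Disjoint P.E Q.E) (hBP : P.IsBase BP)
    (hBQ : Q.IsBase BQ) : (P.disjointSum Q hd).IsBase (BP ∪ BQ) := by
  rw [disjointSum_isBase_iff, union_inter_distrib_right, union_inter_distrib_right,
    inter_eq_self_of_subset_left hBP.subset_ground, inter_eq_self_of_subset_left hBQ.subset_ground,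
    (hd.mono_left hBP.subset_ground).inter_eq, (hd.symm.mono_left hBQ.subset_ground).inter_eq,
    union_empty, empty_union]
  exact ⟨hBP, hBQ, union_subset_union hBP.subset_ground hBQ.subset_ground⟩

lemma isBase_of_isBase_disjointSum (hd : Disjoint P.E Q.E) (hPL : P.E ⊆ L.E)
    (hres : L ↾ P.E = P) (hcon : L ／ P.E = Q) (hB : (P.disjointSum Q hd).IsBase B) : L.IsBase B := by
  obtain ⟨hBP, hBQ, hBPQ⟩ := disjointSum_isBase_iff.1 hB
  have hBasis : L.IsBasis (B ∩ P.E) P.E := (isBase_restrict_iff hPL).1 (by rwa [hres])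
  have hBQ' := (hBasis.contract_isBase_iff.1 (by rwa [hcon])).1
  rwa [← inter_union_distrib_left, union_comm, inter_eq_self_of_subset_left hBPQ] at hBQ'

lemma isBase_freeProduct_of_isBase (hF : IsFreeProduct P Q F) (hPL : P.E ⊆ L.E)
    (hres : L ↾ P.E = P) (hcon : L ／ P.E = Q) (hB : L.IsBase B) : F.IsBase B := by
  have hQ : Q.E = L.E \ P.E := by rw [← hcon, contract_ground]
  obtain ⟨I, hI⟩ := L.exists_isBasis P.E hPL
  obtain ⟨BQ, hBQ⟩ := Q.exists_isBase
  have hPI : P.IsBase I := by rw [← hres]; exact (isBase_restrict_iff hPL).2 hI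
  have hBQI : L.IsBase (BQ ∪ I) := (hI.contract_isBase_iff.1 (by rwa [hcon])).1
  have hdisj : Disjoint BQ I :=
    (disjoint_sdiff_left.mono_left (hQ ▸ hBQ.subset_ground)).mono_right hI.subset
  refine (hF.2 B).2 ⟨?_, ?_, ?_, ?_⟩
  · rw [hQ, union_sdiff_self]
    exact hB.subset_ground.trans subset_union_right
  · rw [erank_eq_eRank, erank_eq_eRank, ← hPI.encard_eq_eRank, ← hBQ.encard_eq_eRank,
      hB.encard_eq_encard_of_isBase hBQI, encard_union_eq hdisj, add_comm]
  · have hBP : (L ↾ P.E).Indep (B ∩ P.E) :=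
      restrict_indep_iff.2 ⟨hB.indep.inter_right _, inter_subset_right⟩
    rwa [hres] at hBP
  · have hBQ : (L ／ P.E).Spanning (B ∩ Q.E) := by
      rw [contract_spanning_iff hPL, hQ]
      have hBL := hB.subset_ground
      exact ⟨hB.spanning.superset (by tauto_set) (by tauto_set),
        disjoint_sdiff_left.mono_left inter_subset_right⟩
    rwa [hcon] at hBQ

lemma restrict_eq_of_isBase_imp (hd : Disjoint P.E Q.E) (hF : IsFreeProduct P Q F)
    (hsum : ∀ B, (P.disjointSum Q hd).IsBase B → L.IsBase B)
    (hfree : ∀ B, L.IsBase B → F.IsBase B) : L ↾ P.E = P := by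
  refine ext_indep rfl fun I (hI : I ⊆ P.E) ↦ ?_
  rw [restrict_indep_iff, and_iff_left hI]
  refine ⟨fun hIL ↦ ?_, fun hIP ↦ ?_⟩
  · obtain ⟨B, hB, hIB⟩ := hIL.exists_isBase_superset
    exact ((hF.2 B).1 (hfree B hB)).2.2.1.subset (subset_inter hIB hI)
  · obtain ⟨BP, hBP, hIBP⟩ := hIP.exists_isBase_superset
    obtain ⟨BQ, hBQ⟩ := Q.exists_isBase
    exact (hsum _ (hBP.union_isBase_disjointSum hd hBQ)).indep.subset
      (hIBP.trans subset_union_left)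

lemma contract_eq_of_isBase_imp (hd : Disjoint P.E Q.E) (hL : L.E = P.E ∪ Q.E)
    (hF : IsFreeProduct P Q F) (hsum : ∀ B, (P.disjointSum Q hd).IsBase B → L.IsBase B)
    (hfree : ∀ B, L.IsBase B → F.IsBase B) : L ／ P.E = Q := by
  have hPL : P.E ⊆ L.E := hL ▸ subset_union_left
  have hQ : L.E \ P.E = Q.E := by rw [hL, union_sdiff_cancel_left hd.inter_eq.subset]
  obtain ⟨BP, hBP⟩ := P.exists_isBase
  have hBasis : L.IsBasis BP P.E := by
    rw [← isBase_restrict_iff hPL, restrict_eq_of_isBase_imp hd hF hsum hfree]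
    exact hBP
  refine (eq_of_isBase_imp_of_isBase_spanning hQ.symm (fun BQ hBQ ↦ ?_) fun X hX ↦ ?_).symm
  · rw [hBasis.contract_isBase_iff, union_comm]
    exact ⟨hsum _ (hBP.union_isBase_disjointSum hd hBQ), hd.symm.mono_left hBQ.subset_ground⟩
  · have hXQ : X ⊆ Q.E := hQ ▸ hX.subset_ground
    have hspan := ((hF.2 _).1 (hfree _ (hBasis.contract_isBase_iff.1 hX).1)).2.2.2
    rwa [union_inter_distrib_right, inter_eq_self_of_subset_left hXQ,
      (hd.mono_left hBP.subset_ground).inter_eq, union_empty] at hspan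

theorem restrict_eq_and_contract_eq_iff (hd : Disjoint P.E Q.E) (hL : L.E = P.E ∪ Q.E)
    (hF : IsFreeProduct P Q F) :
    L ↾ P.E = P ∧ L ／ P.E = Q ↔
      (∀ B, (P.disjointSum Q hd).IsBase B → L.IsBase B) ∧ ∀ B, L.IsBase B → F.IsBase B := by
  have hPL : P.E ⊆ L.E := hL ▸ subset_union_left
  refine ⟨fun ⟨hres, hcon⟩ ↦ ⟨fun B ↦ isBase_of_isBase_disjointSum hd hPL hres hcon,
    fun B ↦ isBase_freeProduct_of_isBase hF hPL hres hcon⟩,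
    fun ⟨hsum, hfree⟩ ↦ ⟨restrict_eq_of_isBase_imp hd hF hsum hfree,
      contract_eq_of_isBase_imp hd hL hF hsum hfree⟩⟩

end Matroid

namespace FinMatroid

lemma ext_iff {M N : FinMatroid α} : M = N ↔ M.1 = N.1 := Subtype.ext_iff

lemma res_ground (M : FinMatroid α) (A : Set α) : (M.res A).1.E = A ∩ M.1.E := rfl

lemma con_ground (M : FinMatroid α) (A : Set α) : (M.con A).1.E = M.1.E \ A := rfl

lemma le_iff {M N : FinMatroid α} :
    M ≤ N ↔ M.1.E = N.1.E ∧ ∀ B, M.1.IsBase B → N.1.IsBase B := Iff.rfl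

lemma ground_subset_of_res_eq {L P : FinMatroid α} (h : L.res P.1.E = P) : P.1.E ⊆ L.1.E := by
  rw [← inter_eq_left, ← res_ground, h]

lemma disjoint_of_con_eq {L P Q : FinMatroid α} (h : L.con P.1.E = Q) : Disjoint P.1.E Q.1.E := by
  rw [← h, con_ground]
  exact disjoint_sdiff_right

lemma res_eq_and_con_eq_iff {L P Q : FinMatroid α} (hPL : P.1.E ⊆ L.1.E) :
    L.res P.1.E = P ∧ L.con P.1.E = Q ↔ L.1 ↾ P.1.E = P.1 ∧ L.1 ／ P.1.E = Q.1 := by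
  rw [ext_iff, ext_iff]
  simp only [res, con, inter_eq_left.2 hPL, Matroid.con_eq_contract]

end FinMatroid

lemma mulCoeff_eq_ite (P Q L : FinMatroid α) :
    mulCoeff K P Q L = if L.res P.1.E = P ∧ L.con P.1.E = Q then 1 else 0 := by
  have hmem : ∀ A : Set α, (∃ a ⊆ L.2.toFinset, ↑a = A) ∧ L.res A = P ∧ L.con A = Q ↔
      A = P.1.E ∧ L.res P.1.E = P ∧ L.con P.1.E = Q := fun A ↦ by
    constructor
    · rintro ⟨⟨a, ha, rfl⟩, hres, hcon⟩
      have hA : (a : Set α) = P.1.E := by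
        rw [← hres, FinMatroid.res_ground, inter_eq_left.2 (L.2.subset_toFinset.1 ha)]
      exact ⟨hA, hA ▸ ⟨hres, hcon⟩⟩
    · rintro ⟨rfl, hc⟩
      refine ⟨⟨P.2.toFinset, L.2.subset_toFinset.2 ?_, P.2.coe_toFinset⟩, hc⟩
      rw [P.2.coe_toFinset]
      exact FinMatroid.ground_subset_of_res_eq hc.1
  unfold mulCoeff
  simp only [Finset.pure_def, Finset.bind_def, Finset.sup_singleton_apply]
  split_ifs with hc
  · rw [Finset.card_eq_one.2 ⟨P.1.E, ?_⟩, Nat.cast_one]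
    ext A
    simp only [Finset.mem_filter, Finset.mem_image, Finset.mem_powerset, Finset.mem_singleton,
      hmem, hc, and_true]
  · rw [Finset.card_eq_zero.2 ?_, Nat.cast_zero]
    ext A
    simp only [Finset.mem_filter, Finset.mem_image, Finset.mem_powerset, hmem, hc, and_false,
      Finset.notMem_empty]

lemma mulB_eq_sum_filter (P Q : FinMatroid α) :
    mulB K P Q = ∑ L ∈ (FinMatroid.matroidOnW_finite (P.1.E ∪ Q.1.E) (P.2.union Q.2)).toFinset
      with L.res P.1.E = P ∧ L.con P.1.E = Q, Finsupp.single L 1 := by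
  rw [mulB, Finset.sum_filter]
  refine Finset.sum_congr rfl fun L _ ↦ ?_
  rw [mulCoeff_eq_ite]
  split_ifs <;> simp

/-- in the dual algebra `C*` of the matroid-minor coalgebra, the product of
matroids `M, N` on disjoint ground sets is `M · N = Σ_{M⊕N ≤ L ≤ M□N} L`, the sum over
the weak-order interval from `M ⊕ N` to `M □ N`; if the ground sets are not disjoint,
then `M · N = 0`. -/
theorem dual_algebra_product_formula (P Q : FinMatroid α) :
    (∀ (hd : Disjoint P.1.E Q.1.E) (F : FinMatroid α), IsFreeProduct P.1 Q.1 F.1 →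
      mulB K P Q = ∑ L ∈ Finset.Icc
          (FinMatroid.mk (P.1.disjointSum Q.1 hd) (by
            rw [Matroid.disjointSum_ground_eq]; exact P.2.union Q.2)) F,
        Finsupp.single L (1 : K)) ∧
    (¬ Disjoint P.1.E Q.1.E → mulB K P Q = 0) := by
  refine ⟨fun hd F hF ↦ ?_, fun hnd ↦ ?_⟩
  · rw [mulB_eq_sum_filter]
    refine Finset.sum_congr (Finset.ext fun L ↦ ?_) fun _ _ ↦ rfl
    rw [Finset.mem_filter, Set.Finite.mem_toFinset, Set.mem_ofPred_eq, Finset.mem_Icc,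
      FinMatroid.le_iff, FinMatroid.le_iff]
    constructor
    · rintro ⟨hL, hc⟩
      obtain ⟨hsum, hfree⟩ := (Matroid.restrict_eq_and_contract_eq_iff hd hL hF).1
        ((FinMatroid.res_eq_and_con_eq_iff (hL ▸ subset_union_left)).1 hc)
      exact ⟨⟨Matroid.disjointSum_ground_eq.trans hL.symm, hsum⟩, hL.trans hF.1.symm, hfree⟩
    · rintro ⟨⟨hE, hsum⟩, -, hfree⟩
      have hL : L.1.E = P.1.E ∪ Q.1.E := hE.symm.trans Matroid.disjointSum_ground_eq
      exact ⟨hL, (FinMatroid.res_eq_and_con_eq_iff (hL ▸ subset_union_left)).2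
        ((Matroid.restrict_eq_and_contract_eq_iff hd hL hF).2 ⟨hsum, hfree⟩)⟩
  · rw [mulB_eq_sum_filter]
    exact Finset.sum_eq_zero fun L hL ↦
      (hnd (FinMatroid.disjoint_of_con_eq (Finset.mem_filter.1 hL).2.2)).elim
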